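/- Let a, b, c, d be four distinct vertices and suppose orientations are fixed arbitrarily for each of the three pairs {a,c}, {a,d}, {b,d}. Then the remaining three pairs {a,b}, {b,c}, {c,d} can be oriented so that the resulting tournament on {a,b,c,d} is strongly connected, i.e., isomorphic to X_4. -/

import Mathlib

/-! A tournament with a Hamiltonian cycle is strongly connected. If the fixed edge between
`a` and `d` points `d → a`, orient the free pairs along `a → b → c → d`, which closes the cycle
`a b c d`; if it points `a → d`, orient them the other way, giving the cycle `a d c b`.
The pairs `{a,c}` and `{b,d}` are the diagonals of this cycle, so their orientation is free. -/

/-- A tournament: a directed graph in which, for every pair of distinct vertices,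
exactly one of the two possible directed edges is present, and there are no loops. -/
def IsTournament {V : Type*} (r : V → V → Prop) : Prop :=
  (∀ v, ¬ r v v) ∧ ∀ u v : V, u ≠ v → (r u v ↔ ¬ r v u)

open Function Relation

theorem IsTournament.comap {V W : Type*} {r : W → W → Prop} (hr : IsTournament r)
    {f : V → W} (hf : Injective f) : IsTournament fun u v => r (f u) (f v) :=
  ⟨fun v => hr.1 (f v), fun _ _ huv => hr.2 _ _ (hf.ne huv)⟩

open Fin.CommRing in
theorem Fin.reflTransGen_of_forall_rel_add_one {n : ℕ} [NeZero n] {r : Fin n → Fin n → Prop}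
    (h : ∀ i, r i (i + 1)) (i j : Fin n) : ReflTransGen r i j := by
  have reach : ∀ k : ℕ, ReflTransGen r i (i + k) := by
    intro k
    induction k with
    | zero => simpa using ReflTransGen.refl
    | succ k ih => simpa [add_assoc] using ih.tail (h _)
  simpa using reach (j - i).val

theorem Fin.reflTransGen_of_forall_add_one_rel {n : ℕ} [NeZero n] {r : Fin n → Fin n → Prop}
    (h : ∀ i, r (i + 1) i) (i j : Fin n) : ReflTransGen r i j :=
  (Fin.reflTransGen_of_forall_rel_add_one (r := flip r) h j i).swap

def orientPair {V : Type*} (x y : V) (o : Bool) : V × V := if o then (x, y) else (y, x)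

/-- The completed tournament on the labels `0, 1, 2, 3`, standing for `a, b, c, d`. -/
def x4Completion (oac oad obd : Bool) (i j : Fin 4) : Prop :=
  (i, j) ∈ [orientPair 0 2 oac, orientPair 0 3 oad, orientPair 1 3 obd,
    orientPair 0 1 !oad, orientPair 1 2 !oad, orientPair 2 3 !oad]

theorem isTournament_x4Completion (oac oad obd : Bool) :
    IsTournament (x4Completion oac oad obd) := by
  unfold IsTournament x4Completion orientPair
  cases oac <;> cases oad <;> cases obd <;> decide

theorem x4Completion_fixed_pairs (oac oad obd : Bool) :
    (x4Completion oac oad obd 0 2 ↔ oac = true) ∧ (x4Completion oac oad obd 0 3 ↔ oad = true) ∧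
      (x4Completion oac oad obd 1 3 ↔ obd = true) := by
  unfold x4Completion orientPair
  cases oac <;> cases oad <;> cases obd <;> decide

theorem reflTransGen_x4Completion (oac oad obd : Bool) (i j : Fin 4) :
    ReflTransGen (x4Completion oac oad obd) i j := by
  unfold x4Completion orientPair
  cases oad
  · refine Fin.reflTransGen_of_forall_rel_add_one (fun i => ?_) i j
    revert i; cases oac <;> cases obd <;> decide
  · refine Fin.reflTransGen_of_forall_add_one_rel (fun i => ?_) i j
    revert i; cases oac <;> cases obd <;> decide

/-- Let `a, b, c, d` be four distinct vertices and fix arbitrary orientations (the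
booleans `oac, oad, obd`) for the pairs `{a,c}`, `{a,d}`, `{b,d}`.  Then the remaining
pairs `{a,b}`, `{b,c}`, `{c,d}` can be oriented so that the resulting tournament on
`{a,b,c,d}` is strongly connected (i.e. is a copy of `X₄`). -/
theorem stmt_9 (a b c d : Fin 4)
    (hab : a ≠ b) (hac : a ≠ c) (had : a ≠ d) (hbc : b ≠ c) (hbd : b ≠ d) (hcd : c ≠ d)
    (oac oad obd : Bool) :
    ∃ t : Fin 4 → Fin 4 → Prop, IsTournament t ∧
      (t a c ↔ oac = true) ∧ (t a d ↔ oad = true) ∧ (t b d ↔ obd = true) ∧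
      ∀ u v : Fin 4, Relation.ReflTransGen t u v := by
  have hinj : Injective ![a, b, c, d] := by
    simp only [Matrix.vecCons, Fin.cons_injective_iff]
    simp [*, Injective, eq_iff_true_of_subsingleton]
  let σ := Equiv.ofBijective _ hinj.bijective_of_finite
  let t u v := x4Completion oac oad obd (σ.symm u) (σ.symm v)
  have ht : ∀ i j, t (σ i) (σ j) ↔ x4Completion oac oad obd i j := by simp [t]
  obtain ⟨hac', had', hbd'⟩ := x4Completion_fixed_pairs oac oad obd
  refine ⟨t, (isTournament_x4Completion oac oad obd).comap σ.symm.injective,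
    (ht 0 2).trans hac', (ht 0 3).trans had', (ht 1 3).trans hbd', fun u v => ?_⟩
  rw [← σ.apply_symm_apply u, ← σ.apply_symm_apply v]
  exact (reflTransGen_x4Completion oac oad obd _ _).lift σ fun i j => (ht i j).2
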